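/- arXiv:1203.3414 — 2 statements merged into one kernel-verified Lean document; each statement's English description precedes it below -/
import Mathlib

section
/- Under the assumptions of the previous statement, if additionally (·|·) is σ-invariant, then for every α in Q one has |α|² = 2 L(α,α), where |α|² = (α|α) and L(α,β) = ((1-σ)^{-1}α|β). Consequently ε(α,α) = (-1)^{L(α,α)} = (-1)^{|α|²/2} = (-1)^{|α|²(|α|²+1)/2}. -/
/-! Since `T` is a right inverse of `1 - σ`, every `α` is `y - σ y` with `y = T α`. Expanding
`|y - σ y|²` and using the `σ`-invariance `|σ y|² = |y|²` gives
`2 (y | y) - 2 (y | σ y) = 2 (y | y - σ y)`, which is `2 L(α, α)`. The parity claims follow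
because `|α|²` is even. -/

theorem AddMonoidHom.sub_apply_sub_eq_two_smul {Q R : Type*} [AddCommGroup Q] [AddCommGroup R]
    (B : Q →+ Q →+ R) (hsym : ∀ x y, B x y = B y x) (σ : Q →+ Q)
    (hσ : ∀ x y, B (σ x) (σ y) = B x y) (y : Q) :
    B (y - σ y) (y - σ y) = (2 : ℤ) • B y (y - σ y) := by
  simp only [map_sub, AddMonoidHom.sub_apply, hσ, hsym (σ y) y, two_zsmul]
  abel

theorem Int.negOnePow_mul_add_one_div_two_of_even {m : ℤ} (hm : Even m) :
    (m * (m + 1) / 2).negOnePow = (m / 2).negOnePow := by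
  obtain ⟨n, rfl⟩ := hm
  have hdiv : (n + n) * (n + n + 1) / 2 = n + 2 * (n * n) := by
    rw [show (n + n) * (n + n + 1) = 2 * (n + 2 * (n * n)) by ring,
      Int.mul_ediv_cancel_left _ two_ne_zero]
  rw [hdiv, ← two_mul, Int.mul_ediv_cancel_left _ two_ne_zero, Int.negOnePow_add,
    Int.negOnePow_two_mul, mul_one]

theorem seifert_diagonal_general
    (Q : Type*) [AddCommGroup Q]
    (B : Q → Q → ℤ)
    (hB₁ : ∀ x x' y : Q, B (x + x') y = B x y + B x' y)
    (hB₂ : ∀ x y y' : Q, B x (y + y') = B x y + B x y')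
    (hBsym : ∀ x y : Q, B x y = B y x)
    (σ : AddAut Q)
    (hσB : ∀ x y : Q, B (σ x) (σ y) = B x y)
    (T : Q →+ Q)
    (hT₁ : ∀ x : Q, T x - σ (T x) = x)
    (L : Q → Q → ℤ) (hL : ∀ α β, L α β = B (T α) β)
    (ε : Q → Q → ℤˣ) (hε : ∀ α β, ε α β = Int.negOnePow (L α β)) :
    ∀ α : Q,
      B α α = 2 * L α α ∧
      ε α α = Int.negOnePow (B α α / 2) ∧
      ε α α = Int.negOnePow (B α α * (B α α + 1) / 2) := by
  intro α
  let B' : Q →+ Q →+ ℤ :=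
    AddMonoidHom.mk' (fun x => AddMonoidHom.mk' (B x) (hB₂ x)) fun x x' => by
      ext y; exact hB₁ x x' y
  have hnorm : B α α = 2 * L α α := by
    simpa [B', hT₁, hL] using
      B'.sub_apply_sub_eq_two_smul hBsym σ.toAddMonoidHom hσB (T α)
  have hhalf : ε α α = Int.negOnePow (B α α / 2) := by
    rw [hε, hnorm, Int.mul_ediv_cancel_left _ two_ne_zero]
  refine ⟨hnorm, hhalf, ?_⟩
  rw [hhalf, Int.negOnePow_mul_add_one_div_two_of_even ⟨L α α, by rw [hnorm, two_mul]⟩]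

/-- If in addition the symmetric bilinear form `B` is `σ`-invariant, then
`|α|² = 2 L(α,α)` for every `α`, and consequently
`ε(α,α) = (-1)^{L(α,α)} = (-1)^{|α|²/2} = (-1)^{|α|²(|α|²+1)/2}`. -/
theorem seifert_diagonal
    (Q : Type*) [AddCommGroup Q]
    (B : Q → Q → ℤ)
    (hB₁ : ∀ x x' y : Q, B (x + x') y = B x y + B x' y)
    (hB₂ : ∀ x y y' : Q, B x (y + y') = B x y + B x y')
    (hBsym : ∀ x y : Q, B x y = B y x)
    (σ : AddAut Q)
    (hσB : ∀ x y : Q, B (σ x) (σ y) = B x y)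
    (hσord : IsOfFinAddOrder σ)
    (T : Q →+ Q)
    (hT₁ : ∀ x : Q, T x - σ (T x) = x)
    (hT₂ : ∀ x : Q, T (x - σ x) = x)
    (L : Q → Q → ℤ) (hL : ∀ α β, L α β = B (T α) β)
    (ε : Q → Q → ℤˣ) (hε : ∀ α β, ε α β = Int.negOnePow (L α β)) :
    ∀ α : Q,
      B α α = 2 * L α α ∧
      ε α α = Int.negOnePow (B α α / 2) ∧
      ε α α = Int.negOnePow (B α α * (B α α + 1) / 2) :=
  seifert_diagonal_general Q B hB₁ hB₂ hBsym σ hσB T hT₁ L hL ε hε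
end

section
/- In the formal power series setting, for a rational (or real) number p and formal variables, one has the expansion identity: (1/k!)·(-∂_{ζ₁})^k (ζ₁^p ζ₂^{-p} δ(ζ₁,ζ₂)) = Σ_{i=0}^k (-1)^i C(p,i) ζ₁^{p-i} ζ₂^{-p} (ι_{ζ₁,ζ₂} - ι_{ζ₂,ζ₁}) (ζ₁-ζ₂)^{-1-k+i}, where δ(ζ₁,ζ₂) = Σ_{j∈ℤ} ζ₁^{-j-1}ζ₂^j is the formal delta function and ι denotes expansion in the indicated domain. -/
/-!
Chu–Vandermonde splits `C(p - j - 1, k) = C(p + (-j - 1), k)` into `∑ᵢ C(p, i) C(-j - 1, k - i)`,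
which matches the right-hand side term by term because of the classical identity
`(ι_{ζ₁,ζ₂} - ι_{ζ₂,ζ₁})(ζ₁ - ζ₂)^{-1-m} = (1/m!) ∂_{ζ₂}^m δ(ζ₁,ζ₂)`: both sides have
coefficient `C(j + m, m) = (-1)^m C(-j - 1, m)` at `ζ₁^{-1-m-j} ζ₂^j`.
-/

noncomputable def genBinom (p : ℚ) (k : ℕ) : ℚ :=
  (∏ j ∈ Finset.range k, (p - j)) / (Nat.factorial k)

theorem genBinom_eq_ringChoose (p : ℚ) (k : ℕ) : genBinom p k = Ring.choose p k := by
  rw [Ring.choose_eq_smul, ← Polynomial.aeval_eq_smeval, Polynomial.aeval_def,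
    ← Polynomial.eval_map, descPochhammer_map, descPochhammer_eval_eq_prod_range, genBinom,
    smul_eq_mul, inv_mul_eq_div]

theorem genBinom_natCast (n k : ℕ) : genBinom n k = n.choose k := by
  rw [genBinom_eq_ringChoose, Ring.choose_natCast]

theorem genBinom_neg (x : ℚ) (k : ℕ) : genBinom (-x) k = (-1) ^ k * genBinom (x + k - 1) k := by
  rw [genBinom_eq_ringChoose, genBinom_eq_ringChoose, Ring.choose_neg, Units.smul_def,
    zsmul_eq_mul, Int.cast_negOnePow_natCast]

theorem genBinom_neg_natCast_sub_one (n k : ℕ) :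
    genBinom (-n - 1) k = (-1) ^ k * (n + k).choose k := by
  rw [← neg_add', genBinom_neg, show (n : ℚ) + 1 + k - 1 = (n + k : ℕ) by push_cast; ring,
    genBinom_natCast]

theorem genBinom_vandermonde (x y : ℚ) (k : ℕ) :
    genBinom (x + y) k = ∑ i ∈ Finset.range (k + 1), genBinom x i * genBinom y (k - i) := by
  simp only [genBinom_eq_ringChoose]
  rw [Ring.add_choose_eq k (Commute.all x y),
    Finset.Nat.sum_antidiagonal_eq_sum_range_succ (fun a b => Ring.choose x a * Ring.choose y b)]

theorem neg_one_zpow_neg_natCast {α : Type*} [DivisionRing α] (n : ℕ) :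
    (-1 : α) ^ (-(n : ℤ)) = (-1) ^ n := by
  rw [zpow_neg, zpow_natCast, ← inv_pow, inv_neg_one]

/-- The coefficient of `ζ₁^{n-j} ζ₂^j` in `(ι_{ζ₁,ζ₂} - ι_{ζ₂,ζ₁})(ζ₁ - ζ₂)^n`. -/
noncomputable def iotaDiffCoeff (n j : ℤ) : ℚ :=
  (if 0 ≤ j then (-1 : ℚ) ^ j * genBinom n j.toNat else 0)
    - (if 0 ≤ n - j then (-1 : ℚ) ^ j * genBinom n (n - j).toNat else 0)

theorem iotaDiffCoeff_neg_sub_one (m : ℕ) (j : ℤ) :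
    iotaDiffCoeff (-1 - m) j = (-1) ^ m * genBinom (-j - 1) m := by
  rcases le_or_gt 0 j with hj | hj
  · lift j to ℕ using hj
    rw [iotaDiffCoeff, if_pos (by positivity), if_neg (by omega), sub_zero, Int.toNat_natCast,
      zpow_natCast]
    push_cast
    rw [neg_sub_comm, genBinom_neg_natCast_sub_one, genBinom_neg_natCast_sub_one,
      ← mul_assoc, ← mul_assoc, ← pow_add, ← pow_add, Even.neg_one_pow ⟨_, rfl⟩,
      Even.neg_one_pow ⟨_, rfl⟩, add_comm m j, Nat.choose_symm_add]
  · obtain ⟨M, rfl⟩ : ∃ M : ℕ, j = -M - 1 := ⟨(-j - 1).toNat, by omega⟩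
    have hM : (-(-(M : ℤ) - 1 : ℤ) - 1 : ℚ) = M := by push_cast; ring
    rw [iotaDiffCoeff, if_neg (by omega), hM, genBinom_natCast]
    rcases lt_or_ge M m with hMm | hmM
    · rw [if_neg (by omega), Nat.choose_eq_zero_of_lt hMm]
      simp
    · obtain ⟨d, rfl⟩ := Nat.exists_eq_add_of_le hmM
      have hd : (-1 - m - (-((m + d : ℕ) : ℤ) - 1)).toNat = d := by omega
      rw [if_pos (by omega), hd,
        show -((m + d : ℕ) : ℤ) - 1 = -((m + d + 1 : ℕ) : ℤ) by push_cast; ring,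
        neg_one_zpow_neg_natCast, show ((-1 - m : ℤ) : ℚ) = -m - 1 by push_cast; ring,
        genBinom_neg_natCast_sub_one, Nat.choose_symm_add]
      rw [zero_sub, ← mul_assoc, ← pow_add, show m + d + 1 + d = m + 2 * d + 1 by ring, pow_succ,
        pow_add, pow_mul, neg_one_sq, one_pow]
      ring

/-- Equality of the coefficients of `ζ₁^{p-1-k-j} ζ₂^{j-p}`; on the left,
`ζ₁^p ζ₂^{-p} δ(ζ₁,ζ₂) = ∑_j ζ₁^{p-j-1} ζ₂^{j-p}` and `(1/k!)(-∂_{ζ₁})^k` acts on each monomial. -/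
theorem delta_derivative_expansion (p : ℚ) (k : ℕ) (j : ℤ) :
    (-1 : ℚ) ^ k * genBinom (p - j - 1) k
      = ∑ i ∈ Finset.range (k + 1), (-1 : ℚ) ^ i * genBinom p i *
          ((if 0 ≤ j then
              (-1 : ℚ) ^ j * genBinom (((-1 - (k : ℤ) + i : ℤ) : ℚ)) j.toNat
            else 0)
           - (if 0 ≤ (-1 - (k : ℤ) + i - j) then
              (-1 : ℚ) ^ j * genBinom (((-1 - (k : ℤ) + i : ℤ) : ℚ))
                (-1 - (k : ℤ) + i - j).toNat
            else 0)) := by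
  rw [show p - j - 1 = p + (-j - 1) by ring, genBinom_vandermonde, Finset.mul_sum]
  refine Finset.sum_congr rfl fun i hi => ?_
  have hik : i ≤ k := Nat.lt_succ_iff.mp (Finset.mem_range.mp hi)
  change _ = _ * iotaDiffCoeff (-1 - k + i) j
  rw [show -1 - (k : ℤ) + i = -1 - ((k - i : ℕ) : ℤ) by omega, iotaDiffCoeff_neg_sub_one,
    ← Nat.add_sub_cancel' hik, pow_add, Nat.add_sub_cancel_left]
  ring
end
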